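/- For every integer q ≥ 2, 3·(log(2q+1) − 2)/(2(q+1)) < ‖â^q‖² < 3·(2·log(2q−1) + 1)/(2(q+1)). In particular ‖â^q‖ = O(√(log q / (q+1))) as q → ∞. -/

import Mathlib

open MeasureTheory Filter

/-- `b_k^q = √(3k(q-k)/(q(q+1)))`. -/
noncomputable def bcoef (q k : ℕ) : ℝ :=
  Real.sqrt (3 * k * ((q : ℝ) - k) / (q * ((q : ℝ) + 1)))

/-- The vector `â^q ∈ ℝ^q` with `â_k^q = b_{k-1}^q - b_k^q`, `k = 1,…,q`. -/
noncomputable def ahat (q : ℕ) : EuclideanSpace ℝ (Fin q) := WithLp.toLp 2 fun (i : Fin q) =>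
  bcoef q (i : ℕ) - bcoef q ((i : ℕ) + 1)


noncomputable def Hsum (n : ℕ) : ℝ := ∑ i ∈ Finset.range n, 1/((i:ℝ)+1)

lemma Hsum_nonneg (n : ℕ) : 0 ≤ Hsum n := by
  unfold Hsum; positivity

lemma Hsum_succ (n : ℕ) : Hsum (n+1) = Hsum n + 1/((n:ℝ)+1) := by
  unfold Hsum; rw [Finset.sum_range_succ]

lemma one_le_Hsum (n : ℕ) (h : 1 ≤ n) : 1 ≤ Hsum n := by
  calc (1:ℝ) = Hsum 1 := by simp [Hsum]
  _ ≤ Hsum n := by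
      unfold Hsum
      exact Finset.sum_le_sum_of_subset_of_nonneg
        (Finset.range_subset_range.2 h) (by intro i _ _; positivity)

lemma log_ratio_lower (y : ℝ) (hy : 0 < y) : Real.log (y+1) - Real.log y ≤ 1/y := by
  have h := Real.log_le_sub_one_of_pos (x := (y+1)/y) (by positivity)
  rw [Real.log_div (by positivity) (by positivity)] at h
  have h2 : (y+1)/y - 1 = 1/y := by field_simp; ring
  linarith

lemma log_ratio_upper (y : ℝ) (hy : 0 < y) : 1/(y+1) ≤ Real.log (y+1) - Real.log y := by
  have h := Real.log_le_sub_one_of_pos (x := y/(y+1)) (by positivity)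
  rw [Real.log_div (by positivity) (by positivity)] at h
  have h2 : y/(y+1) - 1 = -(1/(y+1)) := by field_simp; ring
  linarith

lemma Hsum_le (n : ℕ) : Hsum n ≤ 1 + Real.log ((n:ℝ)+1) := by
  have main : ∀ k : ℕ, 1 ≤ k → Hsum k ≤ 1 + Real.log (k:ℝ) := by
    intro k hk
    induction k with
    | zero => omega
    | succ k ih =>
      rcases Nat.eq_or_lt_of_le hk with h1 | h1
      · simp [← h1, Hsum]
      · have hk1 : 1 ≤ k := by omega
        have ihk := ih hk1
        have key := log_ratio_upper (k:ℝ) (by positivity)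
        rw [Hsum_succ]; push_cast; linarith
  rcases Nat.eq_zero_or_pos n with h | h
  · simp [h, Hsum]
  · have h1 := main n h
    have h2 : Real.log (n:ℝ) ≤ Real.log ((n:ℝ)+1) :=
      Real.log_le_log (by positivity) (by linarith)
    linarith

lemma le_Hsum (n : ℕ) : Real.log ((n:ℝ)+1) ≤ Hsum n := by
  induction n with
  | zero => simp [Hsum]
  | succ n ih =>
    have key := log_ratio_lower ((n:ℝ)+1) (by positivity)
    rw [Hsum_succ]; push_cast; linarith

lemma cast_sub_sub (n j : ℕ) (hj : j < n) : ((n - 1 - j : ℕ) : ℝ) = (n:ℝ) - 1 - j := by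
  have h1 : j ≤ n - 1 := by omega
  push_cast [Nat.cast_sub h1, Nat.cast_sub (by omega : 1 ≤ n)]
  ring

lemma sum_reflect1 (n : ℕ) : ∑ j ∈ Finset.range n, 1/((n:ℝ)-j) = Hsum n := by
  rw [Hsum, ← Finset.sum_range_reflect (fun i => 1/((i:ℝ)+1)) n]
  refine Finset.sum_congr rfl fun j hj => ?_
  rw [cast_sub_sub n j (Finset.mem_range.1 hj)]; ring_nf

lemma sum_shift (n : ℕ) : ∑ j ∈ Finset.range n, 1/((j:ℝ)+2) = Hsum (n+1) - 1 := by
  rw [Hsum, Finset.sum_range_succ' (fun i => 1/((i:ℝ)+1)) n]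
  have h : ∀ j ∈ Finset.range n, 1/(((j+1:ℕ):ℝ)+1) = 1/((j:ℝ)+2) := by
    intro j _; push_cast; ring_nf
  rw [Finset.sum_congr rfl h]
  norm_num

lemma sum_reflect2 (n : ℕ) : ∑ j ∈ Finset.range n, 1/((n:ℝ)+1-j) = Hsum (n+1) - 1 := by
  rw [← sum_shift n, ← Finset.sum_range_reflect (fun i => 1/((i:ℝ)+2)) n]
  refine Finset.sum_congr rfl fun j hj => ?_
  rw [cast_sub_sub n j (Finset.mem_range.1 hj)]; ring_nf

lemma sq_sqrt_sub_le (x y M : ℝ) (hx : 0 ≤ x) (hy : 0 ≤ y) (hM : 0 < M)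
    (hmab : M^2 ≤ x*y) :
    (Real.sqrt x - Real.sqrt y)^2 ≤ (x-y)^2/(4*M) := by
  have hs : Real.sqrt x ^ 2 = x := Real.sq_sqrt hx
  have ht : Real.sqrt y ^ 2 = y := Real.sq_sqrt hy
  have hsn : 0 ≤ Real.sqrt x := Real.sqrt_nonneg x
  have htn : 0 ≤ Real.sqrt y := Real.sqrt_nonneg y
  have hprod : M ≤ Real.sqrt x * Real.sqrt y := by
    have h := Real.sqrt_le_sqrt hmab
    rwa [Real.sqrt_sq hM.le, Real.sqrt_mul hx] at h
  rw [le_div_iff₀ (by positivity)]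
  nlinarith [sq_nonneg (Real.sqrt x - Real.sqrt y), sq_nonneg (Real.sqrt x + Real.sqrt y),
    mul_nonneg (sq_nonneg (Real.sqrt x - Real.sqrt y))
      (by nlinarith [sq_nonneg (Real.sqrt x - Real.sqrt y)] :
        (0:ℝ) ≤ (Real.sqrt x + Real.sqrt y)^2 - 4*M)]

lemma le_sq_sqrt_sub (x y : ℝ) (hx : 0 ≤ x) (hy : 0 ≤ y) (hxy : 0 < x + y) :
    (x-y)^2/(2*(x+y)) ≤ (Real.sqrt x - Real.sqrt y)^2 := by
  have hs : Real.sqrt x ^ 2 = x := Real.sq_sqrt hx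
  have ht : Real.sqrt y ^ 2 = y := Real.sq_sqrt hy
  have hsn : 0 ≤ Real.sqrt x := Real.sqrt_nonneg x
  have htn : 0 ≤ Real.sqrt y := Real.sqrt_nonneg y
  rw [div_le_iff₀ (by positivity)]
  nlinarith [sq_nonneg (Real.sqrt x - Real.sqrt y), sq_nonneg (Real.sqrt x + Real.sqrt y),
    mul_nonneg (sq_nonneg (Real.sqrt x - Real.sqrt y))
      (by nlinarith [sq_nonneg (Real.sqrt x - Real.sqrt y)] :
        (0:ℝ) ≤ 2*(x+y) - (Real.sqrt x + Real.sqrt y)^2)]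

lemma middle_upper (μ a : ℝ) (hμ : 0 ≤ μ) (ha : 0 ≤ a) (ham : a + 1 ≤ μ) :
    (Real.sqrt (3*(a+1)*(μ+1-a)/((μ+2)*(μ+3))) -
      Real.sqrt (3*(a+2)*(μ-a)/((μ+2)*(μ+3))))^2
      ≤ 3/((μ+2)*(μ+3)) * ((μ+1)/4 * (1/(a+1) + 1/(μ-a)) - 1) := by
  have h1 : (0:ℝ) < a + 1 := by linarith
  have h2 : (0:ℝ) < μ - a := by linarith
  have hD : (0:ℝ) < (μ+2)*(μ+3) := by positivity
  set X := 3*(a+1)*(μ+1-a)/((μ+2)*(μ+3)) with hX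
  set Y := 3*(a+2)*(μ-a)/((μ+2)*(μ+3)) with hY
  set M := 3*(a+1)*(μ-a)/((μ+2)*(μ+3)) with hM
  have hXpos : 0 ≤ X := by
    rw [hX]; apply div_nonneg _ hD.le; nlinarith
  have hYpos : 0 ≤ Y := by
    rw [hY]; apply div_nonneg _ hD.le; nlinarith
  have hMpos : 0 < M := by
    rw [hM]; apply div_pos _ hD; nlinarith
  have hmab : M^2 ≤ X*Y := by
    rw [hX, hY, hM, div_pow, div_mul_div_comm,
      show ((μ+2)*(μ+3))^2 = ((μ+2)*(μ+3))*((μ+2)*(μ+3)) by ring]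
    gcongr
    nlinarith [mul_nonneg (mul_nonneg h1.le h2.le) h2.le,
      mul_nonneg h1.le h2.le, mul_nonneg h2.le h2.le]
  have key := sq_sqrt_sub_le X Y M hXpos hYpos hMpos hmab
  have hEq : (X - Y)^2/(4*M) = 3/((μ+2)*(μ+3)) * ((μ+1)/4 * (1/(a+1) + 1/(μ-a)) - 1) := by
    rw [hX, hY, hM]
    field_simp
    ring
  linarith [key, hEq.le, hEq.ge]

lemma middle_lower (μ a : ℝ) (hμ : 0 ≤ μ) (ha : 0 ≤ a) (ham : a + 1 ≤ μ) :
    3/((μ+2)*(μ+3)) * ((μ+3)/4 * (1/(a+2) + 1/(μ+1-a)) - 1)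
      ≤ (Real.sqrt (3*(a+1)*(μ+1-a)/((μ+2)*(μ+3))) -
          Real.sqrt (3*(a+2)*(μ-a)/((μ+2)*(μ+3))))^2 := by
  have h1 : (0:ℝ) < a + 2 := by linarith
  have h2 : (0:ℝ) < μ + 1 - a := by linarith
  have h2' : (0:ℝ) < μ - a := by linarith
  have h0 : (0:ℝ) < a + 1 := by linarith
  have hD : (0:ℝ) < (μ+2)*(μ+3) := by positivity
  set X := 3*(a+1)*(μ+1-a)/((μ+2)*(μ+3)) with hX
  set Y := 3*(a+2)*(μ-a)/((μ+2)*(μ+3)) with hY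
  have hXpos : 0 ≤ X := by
    rw [hX]; apply div_nonneg _ hD.le; nlinarith
  have hYpos : 0 ≤ Y := by
    rw [hY]; apply div_nonneg _ hD.le; nlinarith
  have hXYpos : 0 < X + Y := by
    have : 0 < Y := by rw [hY]; apply div_pos _ hD; nlinarith
    linarith
  have key := le_sq_sqrt_sub X Y hXpos hYpos hXYpos
  refine le_trans ?_ key
  have hden : 2*(X+Y) ≤ 4*(3*(a+2)*(μ+1-a)/((μ+2)*(μ+3))) := by
    rw [hX, hY,
      show 2*(3*(a+1)*(μ+1-a)/((μ+2)*(μ+3)) + 3*(a+2)*(μ-a)/((μ+2)*(μ+3)))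
        = (2*(3*(a+1)*(μ+1-a) + 3*(a+2)*(μ-a)))/((μ+2)*(μ+3)) by ring,
      show 4*(3*(a+2)*(μ+1-a)/((μ+2)*(μ+3))) = (4*(3*(a+2)*(μ+1-a)))/((μ+2)*(μ+3)) by ring]
    apply div_le_div_of_nonneg_right _ hD.le
    nlinarith [mul_nonneg h1.le h2.le]
  have hstep : (X-Y)^2/(4*(3*(a+2)*(μ+1-a)/((μ+2)*(μ+3)))) ≤ (X-Y)^2/(2*(X+Y)) :=
    div_le_div_of_nonneg_left (sq_nonneg _) (by linarith) hden
  refine le_trans ?_ hstep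
  have hEq : (X - Y)^2/(4*(3*(a+2)*(μ+1-a)/((μ+2)*(μ+3))))
      = 3/((μ+2)*(μ+3)) * ((μ+3)/4 * (1/(a+2) + 1/(μ+1-a)) - 1) := by
    rw [hX, hY]
    field_simp
    ring
  exact hEq.ge

set_option maxHeartbeats 1000000 in
/-- Lemma 4.2: `3(log(2q+1) - 2)/(2(q+1)) < ‖â^q‖² < 3(2 log(2q-1) + 1)/(2(q+1))`; in
particular `‖â^q‖ = O(√(log q/(q+1)))`. -/
theorem stmt11 :
    (∀ q : ℕ, 2 ≤ q →
      3 * (Real.log (2 * (q : ℝ) + 1) - 2) / (2 * ((q : ℝ) + 1)) < ‖ahat q‖ ^ 2 ∧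
      ‖ahat q‖ ^ 2 < 3 * (2 * Real.log (2 * (q : ℝ) - 1) + 1) / (2 * ((q : ℝ) + 1))) ∧
    ∃ C : ℝ, ∀ q : ℕ, 2 ≤ q →
      ‖ahat q‖ ≤ C * Real.sqrt (Real.log q / ((q : ℝ) + 1)) := by
  have main : ∀ q : ℕ, 2 ≤ q →
      3 * (Real.log (2 * (q : ℝ) + 1) - 2) / (2 * ((q : ℝ) + 1)) < ‖ahat q‖ ^ 2 ∧
      ‖ahat q‖ ^ 2 < 3 * (2 * Real.log (2 * (q : ℝ) - 1) + 1) / (2 * ((q : ℝ) + 1)) := by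
    intro q hq
    obtain ⟨m, rfl⟩ : ∃ m, q = m + 2 := ⟨q - 2, by omega⟩
    set μ : ℝ := (m:ℝ) with hμdef
    have hμ : (0:ℝ) ≤ μ := Nat.cast_nonneg m
    have hcast : ((m+2:ℕ):ℝ) = μ + 2 := by rw [hμdef]; push_cast; ring
    have hD : (0:ℝ) < (μ+2)*(μ+3) := by positivity
    -- the norm as a sum
    have hnorm : ‖ahat (m+2)‖ ^ 2
        = ∑ i ∈ Finset.range (m+2), (bcoef (m+2) i - bcoef (m+2) (i+1))^2 := by
      rw [EuclideanSpace.norm_eq,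
        Real.sq_sqrt (Finset.sum_nonneg fun i _ => sq_nonneg _)]
      calc ∑ i : Fin (m+2), ‖ahat (m+2) i‖^2
          = ∑ i : Fin (m+2), (bcoef (m+2) (i:ℕ) - bcoef (m+2) ((i:ℕ)+1))^2 :=
            Finset.sum_congr rfl (fun i _ => by
              rw [show ahat (m+2) i = bcoef (m+2) (i:ℕ) - bcoef (m+2) ((i:ℕ)+1) by simp [ahat],
                Real.norm_eq_abs, sq_abs])
        _ = ∑ i ∈ Finset.range (m+2), (bcoef (m+2) i - bcoef (m+2) (i+1))^2 :=
            Fin.sum_univ_eq_sum_range (fun i => (bcoef (m+2) i - bcoef (m+2) (i+1))^2) (m+2)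
    -- split the sum
    have hsplit : ∑ i ∈ Finset.range (m+2), (bcoef (m+2) i - bcoef (m+2) (i+1))^2
        = (bcoef (m+2) 0 - bcoef (m+2) 1)^2
          + (∑ j ∈ Finset.range m, (bcoef (m+2) (j+1) - bcoef (m+2) (j+1+1))^2)
          + (bcoef (m+2) (m+1) - bcoef (m+2) (m+1+1))^2 := by
      rw [Finset.sum_range_succ,
        Finset.sum_range_succ' (fun i => (bcoef (m+2) i - bcoef (m+2) (i+1))^2) m]
      ring
    -- edge terms
    have hb0 : bcoef (m+2) 0 = 0 := by
      simp [bcoef]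
    have hblast : bcoef (m+2) (m+2) = 0 := by
      rw [bcoef]
      rw [show 3*((m+2:ℕ):ℝ)*(((m+2:ℕ):ℝ) - ((m+2:ℕ):ℝ))/(((m+2:ℕ):ℝ)*(((m+2:ℕ):ℝ)+1))
        = 0 by rw [sub_self]; ring]
      exact Real.sqrt_zero
    have e1 : (bcoef (m+2) 0 - bcoef (m+2) 1)^2 = 3*(μ+1)/((μ+2)*(μ+3)) := by
      rw [hb0, zero_sub, neg_sq, bcoef,
        show 3*((1:ℕ):ℝ)*(((m+2:ℕ):ℝ) - ((1:ℕ):ℝ))/(((m+2:ℕ):ℝ)*(((m+2:ℕ):ℝ)+1))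
          = 3*(μ+1)/((μ+2)*(μ+3)) by rw [hμdef]; push_cast; ring]
      exact Real.sq_sqrt (by positivity)
    have e2 : (bcoef (m+2) (m+1) - bcoef (m+2) (m+1+1))^2 = 3*(μ+1)/((μ+2)*(μ+3)) := by
      have : bcoef (m+2) (m+1+1) = 0 := by
        rw [show m+1+1 = m+2 by ring]; exact hblast
      rw [this, sub_zero, bcoef,
        show 3*((m+1:ℕ):ℝ)*(((m+2:ℕ):ℝ) - ((m+1:ℕ):ℝ))/(((m+2:ℕ):ℝ)*(((m+2:ℕ):ℝ)+1))
          = 3*(μ+1)/((μ+2)*(μ+3)) by rw [hμdef]; push_cast; ring]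
      exact Real.sq_sqrt (by positivity)
    -- middle terms
    have hmidU : ∀ j ∈ Finset.range m, (bcoef (m+2) (j+1) - bcoef (m+2) (j+1+1))^2
        ≤ 3/((μ+2)*(μ+3)) * ((μ+1)/4 * (1/((j:ℝ)+1) + 1/(μ-(j:ℝ))) - 1) := by
      intro j hjm
      have hjm' : (j:ℝ)+1 ≤ μ := by
        rw [hμdef]; exact_mod_cast Finset.mem_range.1 hjm
      have hA : bcoef (m+2) (j+1) = Real.sqrt (3*((j:ℝ)+1)*(μ+1-(j:ℝ))/((μ+2)*(μ+3))) := by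
        rw [bcoef]; congr 1; rw [hμdef]; push_cast; ring
      have hB : bcoef (m+2) (j+1+1) = Real.sqrt (3*((j:ℝ)+2)*(μ-(j:ℝ))/((μ+2)*(μ+3))) := by
        rw [bcoef]; congr 1; rw [hμdef]; push_cast; ring
      rw [hA, hB]
      exact middle_upper μ (j:ℝ) hμ (Nat.cast_nonneg j) hjm'
    have hmidL : ∀ j ∈ Finset.range m,
        3/((μ+2)*(μ+3)) * ((μ+3)/4 * (1/((j:ℝ)+2) + 1/(μ+1-(j:ℝ))) - 1)
        ≤ (bcoef (m+2) (j+1) - bcoef (m+2) (j+1+1))^2 := by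
      intro j hjm
      have hjm' : (j:ℝ)+1 ≤ μ := by
        rw [hμdef]; exact_mod_cast Finset.mem_range.1 hjm
      have hA : bcoef (m+2) (j+1) = Real.sqrt (3*((j:ℝ)+1)*(μ+1-(j:ℝ))/((μ+2)*(μ+3))) := by
        rw [bcoef]; congr 1; rw [hμdef]; push_cast; ring
      have hB : bcoef (m+2) (j+1+1) = Real.sqrt (3*((j:ℝ)+2)*(μ-(j:ℝ))/((μ+2)*(μ+3))) := by
        rw [bcoef]; congr 1; rw [hμdef]; push_cast; ring
      rw [hA, hB]
      exact middle_lower μ (j:ℝ) hμ (Nat.cast_nonneg j) hjm'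
    -- sum of middle bounds (upper)
    have hsumU : ∑ j ∈ Finset.range m, (bcoef (m+2) (j+1) - bcoef (m+2) (j+1+1))^2
        ≤ 3/((μ+2)*(μ+3)) * ((μ+1)/2 * Hsum m - μ) := by
      calc ∑ j ∈ Finset.range m, (bcoef (m+2) (j+1) - bcoef (m+2) (j+1+1))^2
          ≤ ∑ j ∈ Finset.range m,
              (3/((μ+2)*(μ+3)) * ((μ+1)/4 * (1/((j:ℝ)+1) + 1/(μ-(j:ℝ))) - 1)) :=
            Finset.sum_le_sum hmidU
        _ = 3/((μ+2)*(μ+3)) * ((μ+1)/2 * Hsum m - μ) := by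
            have expand : ∀ j ∈ Finset.range m,
                3/((μ+2)*(μ+3)) * ((μ+1)/4 * (1/((j:ℝ)+1) + 1/(μ-(j:ℝ))) - 1)
                = (3/((μ+2)*(μ+3)) * ((μ+1)/4)) * (1/((j:ℝ)+1))
                  + ((3/((μ+2)*(μ+3)) * ((μ+1)/4)) * (1/(μ-(j:ℝ)))
                    + (-(3/((μ+2)*(μ+3))))) := by
              intro j _; ring
            rw [Finset.sum_congr rfl expand, Finset.sum_add_distrib,
              Finset.sum_add_distrib, ← Finset.mul_sum, ← Finset.mul_sum,
              Finset.sum_const, Finset.card_range]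
            have r1 : ∑ j ∈ Finset.range m, 1/((j:ℝ)+1) = Hsum m := rfl
            have r2 : ∑ j ∈ Finset.range m, 1/(μ-(j:ℝ)) = Hsum m := by
              rw [hμdef]; exact sum_reflect1 m
            rw [r1, r2, nsmul_eq_mul]
            rw [hμdef]
            ring
    -- sum of middle bounds (lower)
    have hsumL : 3/((μ+2)*(μ+3)) * ((μ+3)/2 * (Hsum (m+1) - 1) - μ)
        ≤ ∑ j ∈ Finset.range m, (bcoef (m+2) (j+1) - bcoef (m+2) (j+1+1))^2 := by
      calc (3:ℝ)/((μ+2)*(μ+3)) * ((μ+3)/2 * (Hsum (m+1) - 1) - μ)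
          = ∑ j ∈ Finset.range m,
              (3/((μ+2)*(μ+3)) * ((μ+3)/4 * (1/((j:ℝ)+2) + 1/(μ+1-(j:ℝ))) - 1)) := by
            have expand : ∀ j ∈ Finset.range m,
                3/((μ+2)*(μ+3)) * ((μ+3)/4 * (1/((j:ℝ)+2) + 1/(μ+1-(j:ℝ))) - 1)
                = (3/((μ+2)*(μ+3)) * ((μ+3)/4)) * (1/((j:ℝ)+2))
                  + ((3/((μ+2)*(μ+3)) * ((μ+3)/4)) * (1/(μ+1-(j:ℝ)))
                    + (-(3/((μ+2)*(μ+3))))) := by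
              intro j _; ring
            rw [Finset.sum_congr rfl expand, Finset.sum_add_distrib,
              Finset.sum_add_distrib, ← Finset.mul_sum, ← Finset.mul_sum,
              Finset.sum_const, Finset.card_range]
            have r1 : ∑ j ∈ Finset.range m, 1/((j:ℝ)+2) = Hsum (m+1) - 1 := sum_shift m
            have r2 : ∑ j ∈ Finset.range m, 1/(μ+1-(j:ℝ)) = Hsum (m+1) - 1 := by
              rw [hμdef]; exact sum_reflect2 m
            rw [r1, r2, nsmul_eq_mul]
            rw [hμdef]
            ring
        _ ≤ _ := Finset.sum_le_sum hmidL
    -- total bounds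
    have hStot : ‖ahat (m+2)‖ ^ 2
        = 3*(μ+1)/((μ+2)*(μ+3)) + 3*(μ+1)/((μ+2)*(μ+3))
          + ∑ j ∈ Finset.range m, (bcoef (m+2) (j+1) - bcoef (m+2) (j+1+1))^2 := by
      rw [hnorm, hsplit, e1, e2]; ring
    have hSub : ‖ahat (m+2)‖ ^ 2
        ≤ (2*(μ+2) + (μ+1)*Hsum m) * (3/(2*((μ+2)*(μ+3)))) := by
      rw [hStot]
      have : 3*(μ+1)/((μ+2)*(μ+3)) + 3*(μ+1)/((μ+2)*(μ+3))
          + 3/((μ+2)*(μ+3)) * ((μ+1)/2 * Hsum m - μ)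
          = (2*(μ+2) + (μ+1)*Hsum m) * (3/(2*((μ+2)*(μ+3)))) := by
        field_simp
        ring
      linarith [hsumU]
    have hSlb : (2*(μ+2) + (μ+3)*(Hsum (m+1) - 1)) * (3/(2*((μ+2)*(μ+3))))
        ≤ ‖ahat (m+2)‖ ^ 2 := by
      rw [hStot]
      have : 3*(μ+1)/((μ+2)*(μ+3)) + 3*(μ+1)/((μ+2)*(μ+3))
          + 3/((μ+2)*(μ+3)) * ((μ+3)/2 * (Hsum (m+1) - 1) - μ)
          = (2*(μ+2) + (μ+3)*(Hsum (m+1) - 1)) * (3/(2*((μ+2)*(μ+3)))) := by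
        field_simp
        ring
      linarith [hsumL]
    -- final comparisons
    have hK : (0:ℝ) < 3/(2*((μ+2)*(μ+3))) := by positivity
    constructor
    · -- lower bound
      rw [hcast, show 2*(μ+2)+1 = 2*μ+5 by ring, show (μ+2)+1 = μ+3 by ring]
      have hkey2 : Real.log (2*μ+5) < 3 + Real.log (μ+2) := by
        have h4 : (4:ℝ) < Real.exp 3 := by
          have := Real.add_one_lt_exp (x := (3:ℝ)) (by norm_num)
          linarith
        have hlt : 2*μ+5 < Real.exp 3 * (μ+2) := by nlinarith
        calc Real.log (2*μ+5) < Real.log (Real.exp 3 * (μ+2)) :=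
              Real.log_lt_log (by positivity) hlt
          _ = 3 + Real.log (μ+2) := by
              rw [Real.log_mul (Real.exp_ne_zero 3) (by positivity), Real.log_exp]
      have hH1 : (1:ℝ) ≤ Hsum (m+1) := one_le_Hsum (m+1) (by omega)
      have hHlog : Real.log (μ+2) ≤ Hsum (m+1) := by
        have := le_Hsum (m+1)
        have hc : ((m+1:ℕ):ℝ)+1 = μ+2 := by rw [hμdef]; push_cast; ring
        rwa [hc] at this
      have core2 : (Real.log (2*μ+5) - 2)*(μ+2) < 2*(μ+2) + (μ+3)*(Hsum (m+1) - 1) := by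
        nlinarith [mul_le_mul_of_nonneg_right hHlog (by linarith : (0:ℝ) ≤ μ+2),
          mul_lt_mul_of_pos_right hkey2 (by linarith : (0:ℝ) < μ+2)]
      calc 3*(Real.log (2*μ+5) - 2)/(2*(μ+3))
          = ((Real.log (2*μ+5) - 2)*(μ+2)) * (3/(2*((μ+2)*(μ+3)))) := by
            field_simp
        _ < (2*(μ+2) + (μ+3)*(Hsum (m+1) - 1)) * (3/(2*((μ+2)*(μ+3)))) :=
            mul_lt_mul_of_pos_right core2 hK
        _ ≤ ‖ahat (m+2)‖ ^ 2 := hSlb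
    · -- upper bound
      rw [hcast, show 2*(μ+2)-1 = 2*μ+3 by ring, show (μ+2)+1 = μ+3 by ring]
      have hH : Hsum m ≤ 1 + Real.log (μ+1) := Hsum_le m
      have hHnn : 0 ≤ Hsum m := Hsum_nonneg m
      have hlog1 : 0 ≤ Real.log (μ+1) := Real.log_nonneg (by linarith)
      have hkey : 2 + Real.log (μ+1) < 2*Real.log (2*μ+3) := by
        have he : Real.exp 2 = Real.exp 1 * Real.exp 1 := by
          rw [← Real.exp_add]; norm_num
        have he2 : Real.exp 2 < 7.39 := by
          nlinarith [he, Real.exp_one_lt_d9, Real.exp_pos 1]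
        have hexp : Real.exp 2 * (μ+1) < (2*μ+3)^2 := by
          nlinarith [he2, hμ, Real.exp_pos 2]
        calc 2 + Real.log (μ+1) = Real.log (Real.exp 2 * (μ+1)) := by
              rw [Real.log_mul (Real.exp_ne_zero 2) (by positivity), Real.log_exp]
          _ < Real.log ((2*μ+3)^2) := Real.log_lt_log (by positivity) hexp
          _ = 2*Real.log (2*μ+3) := by rw [Real.log_pow]; push_cast; ring
      have core : 2*(μ+2) + (μ+1)*Hsum m < (2*Real.log (2*μ+3)+1)*(μ+2) := by
        nlinarith [mul_le_mul_of_nonneg_right hH (by linarith : (0:ℝ) ≤ μ+2),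
          mul_lt_mul_of_pos_right hkey (by linarith : (0:ℝ) < μ+2)]
      calc ‖ahat (m+2)‖ ^ 2 ≤ (2*(μ+2) + (μ+1)*Hsum m) * (3/(2*((μ+2)*(μ+3)))) := hSub
        _ < ((2*Real.log (2*μ+3)+1)*(μ+2)) * (3/(2*((μ+2)*(μ+3)))) :=
            mul_lt_mul_of_pos_right core hK
        _ = 3*(2*Real.log (2*μ+3)+1)/(2*(μ+3)) := by field_simp
  refine ⟨main, 3, fun q hq => ?_⟩
  have hq2 : (2:ℝ) ≤ (q:ℝ) := by exact_mod_cast hq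
  have h12 : (1:ℝ)/2 < Real.log 2 := by
    have he : Real.exp (1/2) * Real.exp (1/2) = Real.exp 1 := by
      rw [← Real.exp_add]; norm_num
    have hlt : Real.exp (1/2) < 2 := by
      nlinarith [Real.exp_pos (1/2 : ℝ), Real.exp_one_lt_d9]
    have := Real.log_lt_log (Real.exp_pos (1/2)) hlt
    rwa [Real.log_exp] at this
  have hlq : Real.log 2 ≤ Real.log q := Real.log_le_log (by norm_num) hq2
  have hlqnn : 0 ≤ Real.log q := by linarith
  have hup := (main q hq).2
  have hlog2 : Real.log (2*(q:ℝ)-1) ≤ 2*Real.log q := by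
    rw [show 2*Real.log (q:ℝ) = Real.log ((q:ℝ)^2) by rw [Real.log_pow]; push_cast; ring]
    exact Real.log_le_log (by linarith) (by nlinarith)
  have hcmp : 3*(2*Real.log (2*(q:ℝ)-1)+1)/(2*((q:ℝ)+1)) ≤ 9*(Real.log q/((q:ℝ)+1)) := by
    rw [show 9*(Real.log (q:ℝ)/((q:ℝ)+1)) = (9*Real.log (q:ℝ))/((q:ℝ)+1) by ring,
      show (9*Real.log (q:ℝ))/((q:ℝ)+1) = (18*Real.log (q:ℝ))/(2*((q:ℝ)+1)) by
        rw [div_eq_div_iff (by positivity) (by positivity)]; ring]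
    apply div_le_div_of_nonneg_right _ (by positivity)
    linarith
  have hsq : ‖ahat q‖^2 ≤ 9*(Real.log q/((q:ℝ)+1)) := le_trans hup.le hcmp
  calc ‖ahat q‖ = Real.sqrt (‖ahat q‖^2) := (Real.sqrt_sq (norm_nonneg _)).symm
    _ ≤ Real.sqrt (9*(Real.log q/((q:ℝ)+1))) := Real.sqrt_le_sqrt hsq
    _ = 3*Real.sqrt (Real.log q/((q:ℝ)+1)) := by
        rw [show (9:ℝ)*(Real.log q/((q:ℝ)+1)) = 3^2*(Real.log q/((q:ℝ)+1)) by norm_num,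
          Real.sqrt_mul (by positivity), Real.sqrt_sq (by norm_num)]
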